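/- Let S ⊆ ℝ² be open, let a ∈ ℝ with a ≠ 0, and let u, v: S → ℝ be differentiable functions satisfying ∂u/∂x = ∂v/∂y and ∂v/∂x = −2(v² + y² + a²)^{1/2} ∂u/∂y on S. Define D = {(z₁,z₂,z₃) ∈ ℂ³ : (Re z₃, Im(z₁z₂)) ∈ S} and H: D → ℝ³ by H(z₁,z₂,z₃) = (Re(z₁z₂) − v(Re z₃, Im(z₁z₂)), Im z₃ − u(Re z₃, Im(z₁z₂)), |z₁|² − |z₂|² − 2a), so that N = H^{-1}(0) is the set {(z₁,z₂,z₃) : z₁z₂ = v(x,y) + iy, z₃ = x + iu(x,y), |z₁|²−|z₂|² = 2a, (x,y) ∈ S}. Then: for every z ∈ N, H is differentiable at z, the derivative dH_z: ℂ³ → ℝ³ is surjective, and the 3-dimensional kernel ker(dH_z) is a special Lagrangian 3-plane (ω and Im Ω vanish on it); hence N is a nonsingular special Lagrangian 3-fold in ℂ³. Conversely, if u, v: S → ℝ are differentiable, and ω and Im Ω vanish on ker(dH_z) for every z ∈ N, then u, v satisfy the two equations above. -/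

import Mathlib

open scoped BigOperators ComplexConjugate

noncomputable section

/-- The Kähler form on `ℂ³`. -/
def wC (u v : Fin 3 → ℂ) : ℝ := (∑ j, conj (u j) * v j).im

/-- The holomorphic volume form `Ω = dz₁∧dz₂∧dz₃` on `ℂ³`. -/
def OmC (v : Fin 3 → (Fin 3 → ℂ)) : ℂ :=
  Matrix.det (Matrix.of fun i j => v j i)

/-- The local coordinates `(x,y) = (Re z₃, Im(z₁z₂))` on `N/U(1)`. -/
def pr13 (z : Fin 3 → ℂ) : ℝ × ℝ := ((z 2).re, (z 0 * z 1).im)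

/-- The defining map of the `U(1)`-invariant `3`-fold
`N = {z : z₁z₂ = v(x,y) + iy, z₃ = x + iu(x,y), |z₁|²−|z₂|² = 2a}`,
as the zero set `H⁻¹(0)`. -/
def H13 (u v : ℝ × ℝ → ℝ) (a : ℝ) (z : Fin 3 → ℂ) : Fin 3 → ℝ :=
  ![(z 0 * z 1).re - v (pr13 z),
    (z 2).im - u (pr13 z),
    Complex.normSq (z 0) - Complex.normSq (z 1) - 2 * a]

/-! ### Auxiliary material -/

/-- First kernel basis vector (tangent to the `U(1)` action). -/
def E1 (z : Fin 3 → ℂ) : Fin 3 → ℂ := ![Complex.I * z 0, -(Complex.I * z 1), 0]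

/-- Second kernel basis vector (`∂/∂x`); `r = (2R)⁻¹`. -/
def E2 (z : Fin 3 → ℂ) (vx ux r : ℝ) : Fin 3 → ℂ :=
  ![conj (z 1) * ((vx * r : ℝ) : ℂ), conj (z 0) * ((vx * r : ℝ) : ℂ),
    1 + (ux : ℂ) * Complex.I]

/-- Third kernel basis vector (`∂/∂y`); `r = (2R)⁻¹`. -/
def E3 (z : Fin 3 → ℂ) (vy uy r : ℝ) : Fin 3 → ℂ :=
  ![conj (z 1) * (((vy * r : ℝ) : ℂ) + ((r : ℝ) : ℂ) * Complex.I),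
    conj (z 0) * (((vy * r : ℝ) : ℂ) + ((r : ℝ) : ℂ) * Complex.I),
    (uy : ℂ) * Complex.I]

/-- The value of the derivative of `H13` at `z` on a tangent vector `w`. -/
def KV (z : Fin 3 → ℂ) (vx vy ux uy : ℝ) (w : Fin 3 → ℂ) : Fin 3 → ℝ :=
  ![(z 0 * w 1 + w 0 * z 1).re - vx * (w 2).re - vy * (z 0 * w 1 + w 0 * z 1).im,
    (w 2).im - ux * (w 2).re - uy * (z 0 * w 1 + w 0 * z 1).im,
    2 * ((z 0).re * (w 0).re + (z 0).im * (w 0).im)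
      - 2 * ((z 1).re * (w 1).re + (z 1).im * (w 1).im)]

lemma clm_eval (f : ℝ × ℝ →L[ℝ] ℝ) (x y : ℝ) : f (x, y) = x * f (1,0) + y * f (0,1) := by
  have h : ((x,y) : ℝ×ℝ) = x • ((1:ℝ),(0:ℝ)) + y • ((0:ℝ),(1:ℝ)) := by simp [Prod.ext_iff]
  rw [h, map_add, map_smul, map_smul, smul_eq_mul, smul_eq_mul]

lemma hasFDeriv_H13 (u v : ℝ × ℝ → ℝ) (a : ℝ) (z : Fin 3 → ℂ)
    (hu : DifferentiableAt ℝ u (pr13 z)) (hv : DifferentiableAt ℝ v (pr13 z)) :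
    ∃ L : (Fin 3 → ℂ) →L[ℝ] (Fin 3 → ℝ), HasFDerivAt (H13 u v a) L z ∧
      ∀ w, L w = KV z (fderiv ℝ v (pr13 z) (1,0)) (fderiv ℝ v (pr13 z) (0,1))
        (fderiv ℝ u (pr13 z) (1,0)) (fderiv ℝ u (pr13 z) (0,1)) w := by
  classical
  set p := pr13 z with hp
  let P : Fin 3 → ((Fin 3 → ℂ) →L[ℝ] ℂ) := fun i => ContinuousLinearMap.proj i
  have hP : ∀ i, HasFDerivAt (fun z : Fin 3 → ℂ => z i) (P i) z := fun i =>
    hasFDerivAt_apply i z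
  have h01 : HasFDerivAt (fun z : Fin 3 → ℂ => z 0 * z 1) (z 0 • P 1 + z 1 • P 0) z :=
    (hP 0).mul (hP 1)
  set M : (Fin 3 → ℂ) →L[ℝ] ℂ := z 0 • P 1 + z 1 • P 0 with hM
  set Dpr : (Fin 3 → ℂ) →L[ℝ] ℝ × ℝ :=
    (Complex.reCLM.comp (P 2)).prod (Complex.imCLM.comp M) with hDpr
  have hpr : HasFDerivAt pr13 Dpr z :=
    HasFDerivAt.prodMk (Complex.reCLM.hasFDerivAt.comp z (hP 2)) (Complex.imCLM.hasFDerivAt.comp z h01)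
  set L0 : (Fin 3 → ℂ) →L[ℝ] ℝ := Complex.reCLM.comp M - (fderiv ℝ v p).comp Dpr with hL0
  have c0 : HasFDerivAt (fun z : Fin 3 → ℂ => (z 0 * z 1).re - v (pr13 z)) L0 z :=
    (Complex.reCLM.hasFDerivAt.comp z h01).sub (hv.hasFDerivAt.comp z hpr)
  set L1 : (Fin 3 → ℂ) →L[ℝ] ℝ :=
    Complex.imCLM.comp (P 2) - (fderiv ℝ u p).comp Dpr with hL1
  have c1 : HasFDerivAt (fun z : Fin 3 → ℂ => (z 2).im - u (pr13 z)) L1 z :=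
    (Complex.imCLM.hasFDerivAt.comp z (hP 2)).sub (hu.hasFDerivAt.comp z hpr)
  set R0 := Complex.reCLM.comp (P 0) with hR0
  set I0 := Complex.imCLM.comp (P 0) with hI0
  set R1 := Complex.reCLM.comp (P 1) with hR1
  set I1 := Complex.imCLM.comp (P 1) with hI1
  have hre0 : HasFDerivAt (fun z : Fin 3 → ℂ => (z 0).re) R0 z :=
    Complex.reCLM.hasFDerivAt.comp z (hP 0)
  have him0 : HasFDerivAt (fun z : Fin 3 → ℂ => (z 0).im) I0 z :=
    Complex.imCLM.hasFDerivAt.comp z (hP 0)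
  have hre1 : HasFDerivAt (fun z : Fin 3 → ℂ => (z 1).re) R1 z :=
    Complex.reCLM.hasFDerivAt.comp z (hP 1)
  have him1 : HasFDerivAt (fun z : Fin 3 → ℂ => (z 1).im) I1 z :=
    Complex.imCLM.hasFDerivAt.comp z (hP 1)
  set L2 : (Fin 3 → ℂ) →L[ℝ] ℝ :=
    ((z 0).re • R0 + (z 0).re • R0 + ((z 0).im • I0 + (z 0).im • I0))
      - ((z 1).re • R1 + (z 1).re • R1 + ((z 1).im • I1 + (z 1).im • I1)) with hL2
  have c2 : HasFDerivAt
      (fun z : Fin 3 → ℂ => Complex.normSq (z 0) - Complex.normSq (z 1) - 2 * a) L2 z := by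
    have : (fun z : Fin 3 → ℂ => Complex.normSq (z 0) - Complex.normSq (z 1) - 2 * a)
        = fun z : Fin 3 → ℂ => ((z 0).re * (z 0).re + (z 0).im * (z 0).im)
          - ((z 1).re * (z 1).re + (z 1).im * (z 1).im) - 2 * a := by
      funext z; simp [Complex.normSq_apply]
    rw [this]
    exact (((hre0.mul hre0).add (him0.mul him0)).sub
      ((hre1.mul hre1).add (him1.mul him1))).sub_const (2*a)
  refine ⟨ContinuousLinearMap.pi ![L0, L1, L2], hasFDerivAt_pi'' ?_, ?_⟩
  · intro i
    rw [ContinuousLinearMap.proj_pi]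
    fin_cases i
    · exact c0
    · exact c1
    · exact c2
  · intro w
    funext i
    fin_cases i
    · show L0 w = _
      simp only [KV, hL0, hM, hDpr, P, ContinuousLinearMap.sub_apply,
        ContinuousLinearMap.coe_comp', Function.comp_apply, ContinuousLinearMap.add_apply,
        ContinuousLinearMap.coe_smul', Pi.smul_apply, ContinuousLinearMap.proj_apply,
        ContinuousLinearMap.prod_apply, Complex.reCLM_apply, Complex.imCLM_apply,
        Matrix.cons_val_zero, smul_eq_mul]
      rw [clm_eval (fderiv ℝ v p)]
      simp [Complex.add_re, Complex.add_im]
      ring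
    · show L1 w = _
      simp only [KV, hL1, hDpr, hM, P, ContinuousLinearMap.sub_apply,
        ContinuousLinearMap.coe_comp', Function.comp_apply, ContinuousLinearMap.add_apply,
        ContinuousLinearMap.coe_smul', Pi.smul_apply, ContinuousLinearMap.proj_apply,
        ContinuousLinearMap.prod_apply, Complex.reCLM_apply, Complex.imCLM_apply,
        Matrix.cons_val_one, Matrix.head_cons, smul_eq_mul]
      rw [clm_eval (fderiv ℝ u p)]
      simp [Complex.add_re, Complex.add_im]
      ring
    · show L2 w = _
      simp only [KV, hL2, hR0, hI0, hR1, hI1, P, ContinuousLinearMap.sub_apply,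
        ContinuousLinearMap.add_apply, ContinuousLinearMap.coe_smul', Pi.smul_apply,
        ContinuousLinearMap.coe_comp', Function.comp_apply, ContinuousLinearMap.proj_apply,
        Complex.reCLM_apply, Complex.imCLM_apply, smul_eq_mul]
      simp
      ring

lemma wc_E1E2 (z : Fin 3 → ℂ) (vx ux r : ℝ) :
    wC (E1 z) (E2 z vx ux r) = 0 := by
  simp [wC, E1, E2, Fin.sum_univ_three, Complex.mul_im, Complex.mul_re,
    Complex.add_re, Complex.add_im, Complex.ofReal_re, Complex.ofReal_im]
  ring

lemma wc_E1E3 (z : Fin 3 → ℂ) (vy uy r : ℝ) :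
    wC (E1 z) (E3 z vy uy r) = 0 := by
  simp [wC, E1, E3, Fin.sum_univ_three, Complex.mul_im, Complex.mul_re,
    Complex.add_re, Complex.add_im, Complex.ofReal_re, Complex.ofReal_im]
  ring

lemma wc_E2E3 (z : Fin 3 → ℂ) (vx ux vy uy r : ℝ)
    (hrs : ((z 0).re^2 + (z 0).im^2 + (z 1).re^2 + (z 1).im^2) * r = 1) :
    wC (E2 z vx ux r) (E3 z vy uy r) = vx * r + uy := by
  simp [wC, E2, E3, Fin.sum_univ_three, Complex.mul_im, Complex.mul_re,
    Complex.add_re, Complex.add_im, Complex.ofReal_re, Complex.ofReal_im]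
  linear_combination (vx * r) * hrs

lemma imOm_E (z : Fin 3 → ℂ) (vx ux vy uy r : ℝ)
    (hrs : ((z 0).re^2 + (z 0).im^2 + (z 1).re^2 + (z 1).im^2) * r = 1) :
    (OmC ![E1 z, E2 z vx ux r, E3 z vy uy r]).im = ux - vy := by
  simp [OmC, Matrix.det_fin_three, E1, E2, E3, Complex.mul_im, Complex.mul_re,
    Complex.add_re, Complex.add_im, Complex.sub_re, Complex.sub_im,
    Complex.ofReal_re, Complex.ofReal_im]
  linear_combination (ux - vy) * hrs

lemma wC_combo (F1 F2 F3 : Fin 3 → ℂ) (h12 : wC F1 F2 = 0) (h13 : wC F1 F3 = 0)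
    (h23 : wC F2 F3 = 0) (c1 x1 y1 c2 x2 y2 : ℝ) :
    wC (c1 • F1 + x1 • F2 + y1 • F3) (c2 • F1 + x2 • F2 + y2 • F3) = 0 := by
  simp only [wC, Fin.sum_univ_three, Pi.add_apply, Pi.smul_apply, Complex.real_smul,
    map_add, map_mul, Complex.conj_ofReal, Complex.add_im, Complex.add_re,
    Complex.mul_im, Complex.mul_re, Complex.ofReal_re, Complex.ofReal_im,
    Complex.conj_re, Complex.conj_im] at *
  linear_combination (c1*x2 - x1*c2) * h12 + (c1*y2 - y1*c2) * h13 + (x1*y2 - y1*x2) * h23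

lemma OmC_combo (F1 F2 F3 : Fin 3 → ℂ) (h : (OmC ![F1, F2, F3]).im = 0)
    (c1 x1 y1 c2 x2 y2 c3 x3 y3 : ℝ) :
    (OmC ![c1 • F1 + x1 • F2 + y1 • F3, c2 • F1 + x2 • F2 + y2 • F3,
      c3 • F1 + x3 • F2 + y3 • F3]).im = 0 := by
  simp only [OmC, Matrix.det_fin_three, Matrix.of_apply, Matrix.cons_val', Matrix.cons_val_zero,
    Matrix.cons_val_one, Matrix.head_cons, Matrix.empty_val', Matrix.cons_val_fin_one,
    Matrix.head_fin_const, Matrix.cons_val_two, Matrix.tail_cons,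
    Pi.add_apply, Pi.smul_apply, Complex.real_smul,
    Complex.add_im, Complex.add_re, Complex.sub_im, Complex.sub_re,
    Complex.mul_im, Complex.mul_re, Complex.ofReal_re, Complex.ofReal_im] at *
  linear_combination (c1*x2*y3 - c1*y2*x3 - x1*c2*y3 + x1*y2*c3 + y1*c2*x3 - y1*x2*c3) * h

lemma ker_decomp (z w : Fin 3 → ℂ) (vx ux vy uy r : ℝ)
    (hrs : ((z 0).re^2 + (z 0).im^2 + (z 1).re^2 + (z 1).im^2) * r = 1)
    (k0 : (z 0 * w 1 + w 0 * z 1).re - vx * (w 2).re - vy * (z 0 * w 1 + w 0 * z 1).im = 0)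
    (k1 : (w 2).im - ux * (w 2).re - uy * (z 0 * w 1 + w 0 * z 1).im = 0)
    (k2 : 2*((z 0).re*(w 0).re + (z 0).im*(w 0).im)
      - 2*((z 1).re*(w 1).re + (z 1).im*(w 1).im) = 0) :
    ∃ c dx dy : ℝ, w = c • E1 z + dx • E2 z vx ux r + dy • E3 z vy uy r := by
  set dx : ℝ := (w 2).re with hdx
  set dy : ℝ := (z 0 * w 1 + w 0 * z 1).im with hdy
  set βc : ℂ := ((vx*dx + vy*dy : ℝ) : ℂ) + (dy : ℂ) * Complex.I with hβc
  have hbre : βc.re = vx*dx + vy*dy := by simp [hβc]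
  have hbim : βc.im = dy := by simp [hβc]
  have h_β : z 0 * w 1 + w 0 * z 1 = βc := by
    apply Complex.ext
    · rw [hbre]; linarith [k0]
    · rw [hbim]
  have hsum : conj (z 0) * z 0 + conj (z 1) * z 1
      = (((z 0).re^2 + (z 0).im^2 + (z 1).re^2 + (z 1).im^2 : ℝ) : ℂ) := by
    apply Complex.ext <;>
      simp [Complex.mul_re, Complex.mul_im, Complex.add_re, Complex.add_im,
        Complex.conj_re, Complex.conj_im, ← Complex.ofReal_pow] <;> ring
  have hst_c : (r : ℂ) * (conj (z 0) * z 0 + conj (z 1) * z 1) = 1 := by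
    rw [hsum, ← Complex.ofReal_mul, ← Complex.ofReal_one]
    norm_cast
    linear_combination hrs
  set W0 : ℂ := w 0 - conj (z 1) * βc * (r : ℂ) with hW0
  set W1 : ℂ := w 1 - conj (z 0) * βc * (r : ℂ) with hW1
  have hb' : z 0 * W1 + W0 * z 1 = 0 := by
    rw [hW0, hW1]
    linear_combination h_β - βc * hst_c
  set α : ℂ := conj (z 0) * W0 with hα
  set δ : ℂ := conj (z 1) * W1 with hδ
  have hA : W0 = z 0 * (α - δ) * (r : ℂ) := by
    rw [hα, hδ]
    linear_combination (-W0) * hst_c + (r : ℂ) * conj (z 1) * hb'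
  have hB : W1 = z 1 * (δ - α) * (r : ℂ) := by
    rw [hα, hδ]
    linear_combination (-W1) * hst_c + (r : ℂ) * conj (z 0) * hb'
  have hRe : α.re = δ.re := by
    rw [hα, hδ, hW0, hW1]
    simp only [Complex.mul_re, Complex.sub_re, Complex.sub_im, Complex.mul_im,
      Complex.conj_re, Complex.conj_im, Complex.ofReal_re, Complex.ofReal_im]
    linear_combination k2 / 2
  set C : ℝ := α.im - δ.im with hC
  have hαδ : α - δ = (C : ℂ) * Complex.I := by
    apply Complex.ext
    · simp [Complex.sub_re, hRe]
    · simp [hC]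
  have G0 : w 0 = (C : ℂ) * (r : ℂ) * (Complex.I * z 0) + conj (z 1) * βc * (r : ℂ) := by
    have := hA
    rw [hαδ] at this
    rw [hW0] at this
    linear_combination this
  have G1 : w 1 = (C : ℂ) * (r : ℂ) * (-(Complex.I * z 1)) + conj (z 0) * βc * (r : ℂ) := by
    have := hB
    rw [show δ - α = -(α - δ) by ring, hαδ] at this
    rw [hW1] at this
    linear_combination this
  have G2 : w 2 = (dx : ℂ) * (1 + (ux : ℂ) * Complex.I) + (dy : ℂ) * ((uy : ℂ) * Complex.I) := by
    apply Complex.ext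
    · simp [Complex.add_re, Complex.mul_re, hdx]
    · simp only [Complex.add_im, Complex.mul_im, Complex.mul_re, Complex.one_re,
        Complex.one_im, Complex.I_re, Complex.I_im, Complex.ofReal_re, Complex.ofReal_im]
      linarith [k1]
  rw [hβc] at G0 G1
  push_cast at G0 G1 G2
  have F0 : w 0 = (C*r) • (Complex.I * z 0) + dx • (conj (z 1) * ((vx*r : ℝ) : ℂ))
      + dy • (conj (z 1) * (((vy*r : ℝ) : ℂ) + (r : ℂ) * Complex.I)) := by
    rw [Complex.real_smul, Complex.real_smul, Complex.real_smul]
    push_cast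
    linear_combination G0
  have F1 : w 1 = (C*r) • (-(Complex.I * z 1)) + dx • (conj (z 0) * ((vx*r : ℝ) : ℂ))
      + dy • (conj (z 0) * (((vy*r : ℝ) : ℂ) + (r : ℂ) * Complex.I)) := by
    rw [Complex.real_smul, Complex.real_smul, Complex.real_smul]
    push_cast
    linear_combination G1
  have F2 : w 2 = (C*r) • (0 : ℂ) + dx • (1 + (ux : ℂ) * Complex.I)
      + dy • ((uy : ℂ) * Complex.I) := by
    rw [Complex.real_smul, Complex.real_smul, Complex.real_smul]
    push_cast
    linear_combination G2
  refine ⟨C * r, dx, dy, ?_⟩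
  funext i
  fin_cases i
  · exact F0
  · exact F1
  · exact F2

section KVlemmas
variable (z : Fin 3 → ℂ) (vx vy ux uy r : ℝ)

lemma KV_E1 : KV z vx vy ux uy (E1 z) = 0 := by
  funext i
  fin_cases i <;> simp [KV, E1, E2, E3, Complex.mul_re, Complex.mul_im, Complex.add_re,
      Complex.add_im, Complex.ofReal_re, Complex.ofReal_im, -mul_eq_zero] <;> ring

lemma KV_E2 (hrs : ((z 0).re^2 + (z 0).im^2 + (z 1).re^2 + (z 1).im^2) * r = 1) :
    KV z vx vy ux uy (E2 z vx ux r) = 0 := by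
  funext i
  fin_cases i <;> simp [KV, E1, E2, E3, Complex.mul_re, Complex.mul_im, Complex.add_re,
      Complex.add_im, Complex.ofReal_re, Complex.ofReal_im, -mul_eq_zero] <;>
    first
      | ring1
      | linear_combination (-vx) * hrs
      | linear_combination (vx) * hrs

lemma KV_E3 (hrs : ((z 0).re^2 + (z 0).im^2 + (z 1).re^2 + (z 1).im^2) * r = 1) :
    KV z vx vy ux uy (E3 z vy uy r) = 0 := by
  funext i
  fin_cases i <;> simp [KV, E1, E2, E3, Complex.mul_re, Complex.mul_im, Complex.add_re,
      Complex.add_im, Complex.ofReal_re, Complex.ofReal_im, -mul_eq_zero] <;>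
    first
      | ring1
      | linear_combination (-vy) * hrs
      | linear_combination (vy) * hrs
      | linear_combination (-2*uy) * hrs
      | linear_combination (2*uy) * hrs
      | linear_combination (-uy) * hrs
      | linear_combination (uy) * hrs

lemma KV_A (hrs : ((z 0).re^2 + (z 0).im^2 + (z 1).re^2 + (z 1).im^2) * r = 1) :
    KV z vx vy ux uy ![conj (z 1) * (r : ℂ), conj (z 0) * (r : ℂ), 0] = ![1,0,0] := by
  funext i
  fin_cases i <;> simp [KV, E1, E2, E3, Complex.mul_re, Complex.mul_im, Complex.add_re,
      Complex.add_im, Complex.ofReal_re, Complex.ofReal_im, -mul_eq_zero] <;>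
    first
      | ring1
      | linear_combination hrs
      | linear_combination (-1 : ℝ) * hrs

lemma KV_B : KV z vx vy ux uy ![0, 0, Complex.I] = ![0,1,0] := by
  funext i
  fin_cases i <;> simp [KV, E1, E2, E3, Complex.mul_re, Complex.mul_im, Complex.add_re,
      Complex.add_im, Complex.ofReal_re, Complex.ofReal_im, -mul_eq_zero] <;> ring

lemma KV_C (hrs : ((z 0).re^2 + (z 0).im^2 + (z 1).re^2 + (z 1).im^2) * r = 1) :
    KV z vx vy ux uy ![z 0 * ((r/2 : ℝ) : ℂ), -(z 1 * ((r/2 : ℝ) : ℂ)), 0] = ![0,0,1] := by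
  funext i
  fin_cases i <;> simp [KV, E1, E2, E3, Complex.mul_re, Complex.mul_im, Complex.add_re,
      Complex.add_im, Complex.ofReal_re, Complex.ofReal_im, -mul_eq_zero] <;>
    first
      | ring1
      | linear_combination hrs
      | linear_combination (-1 : ℝ) * hrs

end KVlemmas

/-- On the zero set of `H13`, `|z₁|² + |z₂|² = 2√(v²+y²+a²)`. -/
lemma sum_normSq (u v : ℝ × ℝ → ℝ) (a : ℝ) (ha : a ≠ 0) (z : Fin 3 → ℂ)
    (hz : H13 u v a z = 0) :
    0 < Real.sqrt ((v (pr13 z))^2 + (pr13 z).2^2 + a^2) ∧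
    (z 0).re^2 + (z 0).im^2 + (z 1).re^2 + (z 1).im^2
      = 2 * Real.sqrt ((v (pr13 z))^2 + (pr13 z).2^2 + a^2) := by
  have h0 : (z 0 * z 1).re - v (pr13 z) = 0 := congrFun hz 0
  have h2 : Complex.normSq (z 0) - Complex.normSq (z 1) - 2 * a = 0 := congrFun hz 2
  set Q : ℝ := (v (pr13 z))^2 + (pr13 z).2^2 + a^2 with hQ
  have hQpos : 0 < Q := by
    have : 0 < a^2 := by positivity
    have h1 : 0 ≤ (v (pr13 z))^2 := sq_nonneg _
    have h2 : 0 ≤ (pr13 z).2^2 := sq_nonneg _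
    rw [hQ]; linarith
  have hRpos : 0 < Real.sqrt Q := Real.sqrt_pos.mpr hQpos
  refine ⟨hRpos, ?_⟩
  have hst : Complex.normSq (z 0) * Complex.normSq (z 1)
      = (v (pr13 z))^2 + (pr13 z).2^2 := by
    rw [← Complex.normSq_mul]
    have hre : (z 0 * z 1).re = v (pr13 z) := by linarith [h0]
    have him : (z 0 * z 1).im = (pr13 z).2 := rfl
    rw [Complex.normSq_apply, hre, him]
    ring
  have hs0 : 0 ≤ Complex.normSq (z 0) := Complex.normSq_nonneg _
  have hs1 : 0 ≤ Complex.normSq (z 1) := Complex.normSq_nonneg _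
  have hsq : Real.sqrt Q ^ 2 = Q := Real.sq_sqrt hQpos.le
  have key : Complex.normSq (z 0) + Complex.normSq (z 1) = 2 * Real.sqrt Q := by
    nlinarith [hst, h2, hsq, hRpos, hs0, hs1]
  have e0 : Complex.normSq (z 0) = (z 0).re^2 + (z 0).im^2 := by
    rw [Complex.normSq_apply]; ring
  have e1 : Complex.normSq (z 1) = (z 1).re^2 + (z 1).im^2 := by
    rw [Complex.normSq_apply]; ring
  rw [e0, e1] at key
  linarith [key]

/-- Existence of a point of `N` above any `p`. -/
lemma exists_point (u v : ℝ × ℝ → ℝ) (a : ℝ) (ha : a ≠ 0) (p : ℝ × ℝ) :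
    ∃ z : Fin 3 → ℂ, pr13 z = p ∧ H13 u v a z = 0 := by
  set Q : ℝ := (v p)^2 + p.2^2 + a^2 with hQ
  have hQpos : 0 < Q := by
    have : 0 < a^2 := by positivity
    have h1 : 0 ≤ (v p)^2 := sq_nonneg _
    have h2 : 0 ≤ p.2^2 := sq_nonneg _
    rw [hQ]; linarith
  set R : ℝ := Real.sqrt Q with hR
  have hsq : R ^ 2 = Q := Real.sq_sqrt hQpos.le
  have hRabs : |a| ≤ R := by
    rw [hR, ← Real.sqrt_sq_eq_abs]
    apply Real.sqrt_le_sqrt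
    nlinarith [sq_nonneg (v p), sq_nonneg p.2]
  rcases lt_or_gt_of_ne ha with hneg | hpos
  · -- a < 0 : use t = R - a > 0, z₂ = √t real
    have ht : 0 < R - a := by
      have : |a| = -a := abs_of_neg hneg
      linarith [hRabs]
    set m : ℝ := Real.sqrt (R - a) with hm
    have hm2 : m^2 = R - a := Real.sq_sqrt ht.le
    have hmpos : 0 < m := Real.sqrt_pos.mpr ht
    have hmne : (m : ℂ) ≠ 0 := by exact_mod_cast hmpos.ne'
    set z : Fin 3 → ℂ := ![((v p : ℝ) + (p.2 : ℝ) * Complex.I) / (m : ℂ), (m : ℂ),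
      (p.1 : ℝ) + (u p : ℝ) * Complex.I] with hzdef
    have hprod : z 0 * z 1 = ((v p : ℝ) : ℂ) + ((p.2 : ℝ) : ℂ) * Complex.I := by
      show ((v p : ℝ) + (p.2 : ℝ) * Complex.I) / (m : ℂ) * (m : ℂ) = _
      field_simp
    have hpr13 : pr13 z = p := by
      show ((((p.1 : ℝ) : ℂ) + ((u p : ℝ) : ℂ) * Complex.I).re, (z 0 * z 1).im) = p
      rw [hprod]
      simp [Complex.add_re, Complex.add_im, Complex.mul_re, Complex.mul_im]
    refine ⟨z, hpr13, ?_⟩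
    funext i
    fin_cases i
    · show (z 0 * z 1).re - v (pr13 z) = 0
      rw [hpr13, hprod]
      simp
    · show (z 2).im - u (pr13 z) = 0
      rw [hpr13]
      show ((((p.1 : ℝ) : ℂ) + ((u p : ℝ) : ℂ) * Complex.I).im) - u p = 0
      simp
    · show Complex.normSq (z 0) - Complex.normSq (z 1) - 2 * a = 0
      show Complex.normSq (((v p : ℝ) + (p.2 : ℝ) * Complex.I) / (m : ℂ))
        - Complex.normSq (m : ℂ) - 2 * a = 0
      rw [Complex.normSq_div, Complex.normSq_add_mul_I, Complex.normSq_ofReal]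
      have hmm : m * m = R - a := by nlinarith [hm2]
      rw [hmm]
      have hvp : (v p)^2 + p.2^2 = R^2 - a^2 := by rw [hsq, hQ]; ring
      field_simp
      linear_combination hvp
  · -- a > 0 : use s = R + a > 0, z₁ = √s real
    have ht : 0 < R + a := by
      have : |a| = a := abs_of_pos hpos
      linarith [hRabs]
    set m : ℝ := Real.sqrt (R + a) with hm
    have hm2 : m^2 = R + a := Real.sq_sqrt ht.le
    have hmpos : 0 < m := Real.sqrt_pos.mpr ht
    have hmne : (m : ℂ) ≠ 0 := by exact_mod_cast hmpos.ne'
    set z : Fin 3 → ℂ := ![(m : ℂ), ((v p : ℝ) + (p.2 : ℝ) * Complex.I) / (m : ℂ),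
      (p.1 : ℝ) + (u p : ℝ) * Complex.I] with hzdef
    have hprod : z 0 * z 1 = ((v p : ℝ) : ℂ) + ((p.2 : ℝ) : ℂ) * Complex.I := by
      show (m : ℂ) * (((v p : ℝ) + (p.2 : ℝ) * Complex.I) / (m : ℂ)) = _
      field_simp
    have hpr13 : pr13 z = p := by
      show ((((p.1 : ℝ) : ℂ) + ((u p : ℝ) : ℂ) * Complex.I).re, (z 0 * z 1).im) = p
      rw [hprod]
      simp [Complex.add_re, Complex.add_im, Complex.mul_re, Complex.mul_im]
    refine ⟨z, hpr13, ?_⟩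
    funext i
    fin_cases i
    · show (z 0 * z 1).re - v (pr13 z) = 0
      rw [hpr13, hprod]
      simp
    · show (z 2).im - u (pr13 z) = 0
      rw [hpr13]
      show ((((p.1 : ℝ) : ℂ) + ((u p : ℝ) : ℂ) * Complex.I).im) - u p = 0
      simp
    · show Complex.normSq (z 0) - Complex.normSq (z 1) - 2 * a = 0
      show Complex.normSq (m : ℂ)
        - Complex.normSq (((v p : ℝ) + (p.2 : ℝ) * Complex.I) / (m : ℂ)) - 2 * a = 0
      rw [Complex.normSq_div, Complex.normSq_add_mul_I, Complex.normSq_ofReal]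
      have hmm : m * m = R + a := by nlinarith [hm2]
      rw [hmm]
      have hvp : (v p)^2 + p.2^2 = R^2 - a^2 := by rw [hsq, hQ]; ring
      field_simp
      linear_combination (-1 : ℝ) * hvp

/-- Proposition 8.1(b): for `a ≠ 0` and differentiable `u,v : S → ℝ`, the set
`N = H⁻¹(0)` is a nonsingular special Lagrangian `3`-fold in `ℂ³` — i.e. at each
`z ∈ N`, `H` is differentiable with surjective derivative whose `3`-dimensional
kernel is a special Lagrangian `3`-plane — if and only if `u,v` satisfy
`∂u/∂x = ∂v/∂y` and `∂v/∂x = −2(v²+y²+a²)^{1/2} ∂u/∂y` on `S`. -/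
theorem stmt13 (S : Set (ℝ × ℝ)) (hS : IsOpen S) (a : ℝ) (ha : a ≠ 0)
    (u v : ℝ × ℝ → ℝ)
    (hdiff : ∀ p ∈ S, DifferentiableAt ℝ u p ∧ DifferentiableAt ℝ v p) :
    ((∀ p ∈ S, fderiv ℝ u p (1, 0) = fderiv ℝ v p (0, 1) ∧
        fderiv ℝ v p (1, 0)
          = -2 * Real.sqrt ((v p) ^ 2 + p.2 ^ 2 + a ^ 2) * fderiv ℝ u p (0, 1)) →
      ∀ z : Fin 3 → ℂ, pr13 z ∈ S → H13 u v a z = 0 →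
        DifferentiableAt ℝ (H13 u v a) z ∧
        Function.Surjective (fderiv ℝ (H13 u v a) z) ∧
        Module.finrank ℝ (LinearMap.ker (fderiv ℝ (H13 u v a) z : (Fin 3 → ℂ) →ₗ[ℝ] (Fin 3 → ℝ))) = 3 ∧
        (∀ p ∈ LinearMap.ker (fderiv ℝ (H13 u v a) z : (Fin 3 → ℂ) →ₗ[ℝ] (Fin 3 → ℝ)),
          ∀ q ∈ LinearMap.ker (fderiv ℝ (H13 u v a) z : (Fin 3 → ℂ) →ₗ[ℝ] (Fin 3 → ℝ)), wC p q = 0) ∧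
        (∀ p ∈ LinearMap.ker (fderiv ℝ (H13 u v a) z : (Fin 3 → ℂ) →ₗ[ℝ] (Fin 3 → ℝ)),
          ∀ q ∈ LinearMap.ker (fderiv ℝ (H13 u v a) z : (Fin 3 → ℂ) →ₗ[ℝ] (Fin 3 → ℝ)),
          ∀ r ∈ LinearMap.ker (fderiv ℝ (H13 u v a) z : (Fin 3 → ℂ) →ₗ[ℝ] (Fin 3 → ℝ)), (OmC ![p, q, r]).im = 0)) ∧
    ((∀ z : Fin 3 → ℂ, pr13 z ∈ S → H13 u v a z = 0 →
        (∀ p ∈ LinearMap.ker (fderiv ℝ (H13 u v a) z : (Fin 3 → ℂ) →ₗ[ℝ] (Fin 3 → ℝ)),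
          ∀ q ∈ LinearMap.ker (fderiv ℝ (H13 u v a) z : (Fin 3 → ℂ) →ₗ[ℝ] (Fin 3 → ℝ)), wC p q = 0) ∧
        (∀ p ∈ LinearMap.ker (fderiv ℝ (H13 u v a) z : (Fin 3 → ℂ) →ₗ[ℝ] (Fin 3 → ℝ)),
          ∀ q ∈ LinearMap.ker (fderiv ℝ (H13 u v a) z : (Fin 3 → ℂ) →ₗ[ℝ] (Fin 3 → ℝ)),
          ∀ r ∈ LinearMap.ker (fderiv ℝ (H13 u v a) z : (Fin 3 → ℂ) →ₗ[ℝ] (Fin 3 → ℝ)),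
            (OmC ![p, q, r]).im = 0)) →
      ∀ p ∈ S, fderiv ℝ u p (1, 0) = fderiv ℝ v p (0, 1) ∧
        fderiv ℝ v p (1, 0)
          = -2 * Real.sqrt ((v p) ^ 2 + p.2 ^ 2 + a ^ 2) * fderiv ℝ u p (0, 1)) := by
  constructor
  · -- forward direction
    intro hPDE z hzS hz
    obtain ⟨hu, hv⟩ := hdiff _ hzS
    obtain ⟨L, hL, happ⟩ := hasFDeriv_H13 u v a z hu hv
    have hfd : fderiv ℝ (H13 u v a) z = L := hL.fderiv
    obtain ⟨hRpos, hsum⟩ := sum_normSq u v a ha z hz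
    set R : ℝ := Real.sqrt ((v (pr13 z))^2 + (pr13 z).2^2 + a^2) with hR
    set r : ℝ := (2*R)⁻¹ with hr
    have hRne : R ≠ 0 := hRpos.ne'
    have hrs : ((z 0).re^2 + (z 0).im^2 + (z 1).re^2 + (z 1).im^2) * r = 1 := by
      rw [hsum, hr]
      field_simp
    set vx : ℝ := fderiv ℝ v (pr13 z) (1,0) with hvx
    set vy : ℝ := fderiv ℝ v (pr13 z) (0,1) with hvy
    set ux : ℝ := fderiv ℝ u (pr13 z) (1,0) with hux
    set uy : ℝ := fderiv ℝ u (pr13 z) (0,1) with huy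
    obtain ⟨hPDE1, hPDE2⟩ := hPDE _ hzS
    have h23 : wC (E2 z vx ux r) (E3 z vy uy r) = 0 := by
      rw [wc_E2E3 z vx ux vy uy r hrs]
      have hvxval : vx = -2*R*uy := by rw [hvx, huy, hR]; exact hPDE2
      rw [hvxval, hr]
      field_simp
      ring
    have hIm : (OmC ![E1 z, E2 z vx ux r, E3 z vy uy r]).im = 0 := by
      rw [imOm_E z vx ux vy uy r hrs]
      have : ux = vy := by rw [hux, hvy]; exact hPDE1
      rw [this]; ring
    have hsurj : Function.Surjective L := by
      intro y
      refine ⟨y 0 • ![conj (z 1) * (r:ℂ), conj (z 0) * (r:ℂ), 0] + y 1 • ![0,0,Complex.I]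
        + y 2 • ![z 0 * ((r/2 : ℝ):ℂ), -(z 1 * ((r/2:ℝ):ℂ)), 0], ?_⟩
      rw [map_add, map_add, map_smul, map_smul, map_smul, happ _, happ _, happ _,
        KV_A z vx vy ux uy r hrs, KV_B z vx vy ux uy, KV_C z vx vy ux uy r hrs]
      funext i
      fin_cases i <;> simp
    have hdecomp : ∀ w ∈ LinearMap.ker (L : (Fin 3 → ℂ) →ₗ[ℝ] (Fin 3 → ℝ)),
        ∃ c dx dy : ℝ, w = c • E1 z + dx • E2 z vx ux r + dy • E3 z vy uy r := by
      intro w hw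
      have hw0 : L w = 0 := LinearMap.mem_ker.mp hw
      have hKV : KV z vx vy ux uy w = 0 := (happ w).symm.trans hw0
      have k0 : (z 0 * w 1 + w 0 * z 1).re - vx * (w 2).re
          - vy * (z 0 * w 1 + w 0 * z 1).im = 0 := congrFun hKV 0
      have k1 : (w 2).im - ux * (w 2).re - uy * (z 0 * w 1 + w 0 * z 1).im = 0 :=
        congrFun hKV 1
      have k2 : 2*((z 0).re*(w 0).re + (z 0).im*(w 0).im)
          - 2*((z 1).re*(w 1).re + (z 1).im*(w 1).im) = 0 := congrFun hKV 2
      exact ker_decomp z w vx ux vy uy r hrs k0 k1 k2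
    refine ⟨hL.differentiableAt, ?_, ?_, ?_, ?_⟩
    · rw [hfd]; exact hsurj
    · rw [hfd]
      have hrange : LinearMap.range (L : (Fin 3 → ℂ) →ₗ[ℝ] (Fin 3 → ℝ)) = ⊤ := LinearMap.range_eq_top.mpr hsurj
      have h1 := LinearMap.finrank_range_add_finrank_ker (L : (Fin 3 → ℂ) →ₗ[ℝ] (Fin 3 → ℝ))
      have hdom : Module.finrank ℝ (Fin 3 → ℂ) = 6 := by
        simp [Module.finrank_pi_fintype, Complex.finrank_real_complex]
      have hcod : Module.finrank ℝ (Fin 3 → ℝ) = 3 := by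
        simp [Module.finrank_pi]
      rw [hdom] at h1
      have h2 : Module.finrank ℝ (LinearMap.range (L : (Fin 3 → ℂ) →ₗ[ℝ] (Fin 3 → ℝ))) = 3 := by
        rw [hrange, finrank_top, hcod]
      have hkereq : LinearMap.ker (L : (Fin 3 → ℂ) →ₗ[ℝ] (Fin 3 → ℝ)) = LinearMap.ker (L : (Fin 3 → ℂ) →ₗ[ℝ] (Fin 3 → ℝ)) := rfl
      have hrgeq : LinearMap.range (L : (Fin 3 → ℂ) →ₗ[ℝ] (Fin 3 → ℝ)) = LinearMap.range (L : (Fin 3 → ℂ) →ₗ[ℝ] (Fin 3 → ℝ)) := rfl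
      rw [hkereq, hrgeq, h2] at h1
      omega
    · rw [hfd]
      intro pp hp qq hq
      obtain ⟨c1, x1, y1, hp'⟩ := hdecomp pp hp
      obtain ⟨c2, x2, y2, hq'⟩ := hdecomp qq hq
      rw [hp', hq']
      exact wC_combo _ _ _ (wc_E1E2 z vx ux r) (wc_E1E3 z vy uy r) h23 c1 x1 y1 c2 x2 y2
    · rw [hfd]
      intro pp hp qq hq rr hr'
      obtain ⟨c1, x1, y1, hp'⟩ := hdecomp pp hp
      obtain ⟨c2, x2, y2, hq'⟩ := hdecomp qq hq
      obtain ⟨c3, x3, y3, hr''⟩ := hdecomp rr hr'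
      rw [hp', hq', hr'']
      exact OmC_combo _ _ _ hIm c1 x1 y1 c2 x2 y2 c3 x3 y3
  · -- converse direction
    intro hvan p hpS
    obtain ⟨z, hpr, hz⟩ := exists_point u v a ha p
    subst hpr
    obtain ⟨hu, hv⟩ := hdiff _ hpS
    obtain ⟨L, hL, happ⟩ := hasFDeriv_H13 u v a z hu hv
    have hfd : fderiv ℝ (H13 u v a) z = L := hL.fderiv
    obtain ⟨hRpos, hsum⟩ := sum_normSq u v a ha z hz
    set R : ℝ := Real.sqrt ((v (pr13 z))^2 + (pr13 z).2^2 + a^2) with hR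
    set r : ℝ := (2*R)⁻¹ with hr
    have hRne : R ≠ 0 := hRpos.ne'
    have hrs : ((z 0).re^2 + (z 0).im^2 + (z 1).re^2 + (z 1).im^2) * r = 1 := by
      rw [hsum, hr]
      field_simp
    set vx : ℝ := fderiv ℝ v (pr13 z) (1,0) with hvx
    set vy : ℝ := fderiv ℝ v (pr13 z) (0,1) with hvy
    set ux : ℝ := fderiv ℝ u (pr13 z) (1,0) with hux
    set uy : ℝ := fderiv ℝ u (pr13 z) (0,1) with huy
    obtain ⟨hω, hΩ⟩ := hvan z hpS hz
    rw [hfd] at hω hΩ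
    have mE1 : E1 z ∈ LinearMap.ker (L : (Fin 3 → ℂ) →ₗ[ℝ] (Fin 3 → ℝ)) :=
      LinearMap.mem_ker.mpr ((happ _).trans (KV_E1 z vx vy ux uy))
    have mE2 : E2 z vx ux r ∈ LinearMap.ker (L : (Fin 3 → ℂ) →ₗ[ℝ] (Fin 3 → ℝ)) :=
      LinearMap.mem_ker.mpr ((happ _).trans (KV_E2 z vx vy ux uy r hrs))
    have mE3 : E3 z vy uy r ∈ LinearMap.ker (L : (Fin 3 → ℂ) →ₗ[ℝ] (Fin 3 → ℝ)) :=
      LinearMap.mem_ker.mpr ((happ _).trans (KV_E3 z vx vy ux uy r hrs))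
    constructor
    · have h1 := hΩ _ mE1 _ mE2 _ mE3
      rw [imOm_E z vx ux vy uy r hrs] at h1
      show ux = vy
      linarith [h1]
    · have h2 := hω _ mE2 _ mE3
      rw [wc_E2E3 z vx ux vy uy r hrs, hr] at h2
      show vx = -2*R*uy
      have h2R : (2*R) ≠ 0 := by positivity
      field_simp at h2
      linarith [h2]
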